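/- Let A, B : D → ℝ be C^1 functions on an open set D ⊆ {(x_0, r) : r > 0}, and define φ(x) = A(x_0, |x̲|) + ω B(x_0, |x̲|) for x = x_0 + x̲ with x̲ ≠ 0, where ω = x̲/|x̲|. Then the generalized Cauchy–Riemann operator gives Dφ = (∂_{x_0}A - ∂_r B - ((n-1)/r)B) + ω(∂_{x_0}B + ∂_r A); in particular Dφ = 0 if and only if A and B satisfy the Vekua system ∂_{x_0}A - ∂_r B = ((n-1)/r)B and ∂_{x_0}B + ∂_r A = 0. -/

import Mathlib

set_option maxHeartbeats 1000000

/-- For an axial function `φ(x) = A(x₀,r) + ω B(x₀,r)` (with `r = |x̲|`,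
`ω = x̲/r`, values in a normed real algebra with Clifford generators), the
generalized Cauchy–Riemann operator gives
`Dφ = (∂₀A - ∂ᵣB - ((n-1)/r)B) + ω(∂₀B + ∂ᵣA)`; in particular (since `1`
and `ω` are linearly independent) `Dφ = 0` iff `A, B` satisfy the Vekua
system `∂₀A - ∂ᵣB = ((n-1)/r)B` and `∂₀B + ∂ᵣA = 0`. -/
theorem axial_monogenic_iff_vekua (n : ℕ) (𝒜 : Type*) [NormedRing 𝒜]
    [NormedAlgebra ℝ 𝒜] (e : Fin n → 𝒜)
    (he : ∀ j, e j * e j = -1)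
    (hanti : ∀ i j, i ≠ j → e i * e j + e j * e i = 0)
    (hindep : ∀ v : Fin n → ℝ, v ≠ 0 → ∀ a b : ℝ,
      algebraMap ℝ 𝒜 a + b • (∑ j, v j • e j) = 0 → a = 0 ∧ b = 0)
    (D : Set (ℝ × ℝ)) (hD : IsOpen D) (hDpos : ∀ p ∈ D, 0 < p.2)
    (A B : ℝ × ℝ → ℝ) (hA : ContDiffOn ℝ 1 A D) (hB : ContDiffOn ℝ 1 B D) :
    let r : (Fin (n + 1) → ℝ) → ℝ := fun x => Real.sqrt (∑ j : Fin n, x j.succ ^ 2)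
    let vec : (Fin (n + 1) → ℝ) → 𝒜 := fun x => ∑ j : Fin n, x j.succ • e j
    let φ : (Fin (n + 1) → ℝ) → 𝒜 := fun x =>
      algebraMap ℝ 𝒜 (A (x 0, r x)) + ((r x)⁻¹ * B (x 0, r x)) • vec x
    let Dop : ((Fin (n + 1) → ℝ) → 𝒜) → (Fin (n + 1) → ℝ) → 𝒜 :=
      fun f x => fderiv ℝ f x (Pi.single 0 1) +
        ∑ j : Fin n, e j * fderiv ℝ f x (Pi.single j.succ 1)
    ∀ x : Fin (n + 1) → ℝ, (x 0, r x) ∈ D → (fun j : Fin n => x j.succ) ≠ 0 →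
      (Dop φ x =
        algebraMap ℝ 𝒜
            (fderiv ℝ A (x 0, r x) (1, 0) - fderiv ℝ B (x 0, r x) (0, 1) -
              (((n : ℝ) - 1) / r x) * B (x 0, r x)) +
          ((fderiv ℝ B (x 0, r x) (1, 0) + fderiv ℝ A (x 0, r x) (0, 1)) *
              (r x)⁻¹) • vec x) ∧
      (Dop φ x = 0 ↔
        (fderiv ℝ A (x 0, r x) (1, 0) - fderiv ℝ B (x 0, r x) (0, 1) =
            (((n : ℝ) - 1) / r x) * B (x 0, r x) ∧
          fderiv ℝ B (x 0, r x) (1, 0) + fderiv ℝ A (x 0, r x) (0, 1) = 0)) := by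
  intro r vec φ Dop x hx hvx
  classical
  obtain ⟨j0, hj0⟩ := Function.ne_iff.mp hvx
  have hj0' : x j0.succ ≠ 0 := hj0
  have hq : 0 < ∑ j : Fin n, x j.succ ^ 2 :=
    Finset.sum_pos' (fun i _ => sq_nonneg _)
      ⟨j0, Finset.mem_univ _, lt_of_le_of_ne (sq_nonneg _) (Ne.symm (pow_ne_zero 2 hj0'))⟩
  have hr : 0 < r x := Real.sqrt_pos.mpr hq
  have hrne : r x ≠ 0 := hr.ne'
  have hr2 : r x ^ 2 = ∑ j : Fin n, x j.succ ^ 2 := Real.sq_sqrt hq.le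
  -- derivative of the sum of squares
  have hsq : ∀ j : Fin n, HasFDerivAt (fun y : Fin (n+1) → ℝ => y j.succ ^ 2)
      (x j.succ • (ContinuousLinearMap.proj j.succ : (Fin (n+1) → ℝ) →L[ℝ] ℝ) +
        x j.succ • (ContinuousLinearMap.proj j.succ : (Fin (n+1) → ℝ) →L[ℝ] ℝ)) x := by
    intro j
    have h1 : HasFDerivAt (fun y : Fin (n+1) → ℝ => y j.succ)
        (ContinuousLinearMap.proj j.succ : (Fin (n+1) → ℝ) →L[ℝ] ℝ) x := hasFDerivAt_apply (𝕜 := ℝ) (F' := fun _ : Fin (n+1) => ℝ) j.succ x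
    simpa [pow_two] using h1.fun_mul h1
  have hqd : HasFDerivAt (fun y : Fin (n+1) → ℝ => ∑ j : Fin n, y j.succ ^ 2)
      (∑ j : Fin n, (x j.succ • (ContinuousLinearMap.proj j.succ : (Fin (n+1) → ℝ) →L[ℝ] ℝ) +
        x j.succ • (ContinuousLinearMap.proj j.succ : (Fin (n+1) → ℝ) →L[ℝ] ℝ))) x :=
    HasFDerivAt.fun_sum fun j _ => hsq j
  set R' : (Fin (n+1) → ℝ) →L[ℝ] ℝ := (1 / (2 * r x)) • ∑ j : Fin n,
    (x j.succ • (ContinuousLinearMap.proj j.succ : (Fin (n+1) → ℝ) →L[ℝ] ℝ) +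
      x j.succ • (ContinuousLinearMap.proj j.succ : (Fin (n+1) → ℝ) →L[ℝ] ℝ)) with hR'def
  have hrd : HasFDerivAt r R' x := hqd.sqrt hq.ne'
  have hR'eval : ∀ v, R' v = (r x)⁻¹ * ∑ j : Fin n, x j.succ * v j.succ := by
    intro v
    simp only [hR'def, ContinuousLinearMap.smul_apply, ContinuousLinearMap.sum_apply,
      ContinuousLinearMap.add_apply, ContinuousLinearMap.smul_apply,
      ContinuousLinearMap.proj_apply, smul_eq_mul]
    rw [Finset.mul_sum, Finset.mul_sum]
    refine Finset.sum_congr rfl fun j _ => ?_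
    field_simp
    ring
  have hR0 : R' (Pi.single (0 : Fin (n+1)) (1:ℝ)) = 0 := by
    rw [hR'eval]
    have hs0 : ∀ j : Fin n, (Pi.single (0 : Fin (n+1)) (1:ℝ) : Fin (n+1) → ℝ) j.succ = 0 :=
      fun j => by simp [Pi.single_apply, Fin.succ_ne_zero j]
    simp [hs0]
  have hRi : ∀ i : Fin n, R' (Pi.single (i.succ : Fin (n+1)) (1:ℝ)) = x i.succ * (r x)⁻¹ := by
    intro i
    rw [hR'eval]
    simp [Pi.single_apply, Fin.succ_inj, mul_ite, Finset.sum_ite_eq']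
    ring
  -- derivative of y ↦ (y 0, r y)
  set g' : (Fin (n+1) → ℝ) →L[ℝ] (ℝ × ℝ) :=
    (ContinuousLinearMap.proj (0 : Fin (n+1)) : (Fin (n+1) → ℝ) →L[ℝ] ℝ).prod R' with hg'def
  have hgd : HasFDerivAt (fun y : Fin (n+1) → ℝ => (y 0, r y)) g' x :=
    HasFDerivAt.prodMk (hasFDerivAt_apply (𝕜 := ℝ) (F' := fun _ : Fin (n+1) => ℝ) 0 x) hrd
  have hAd : HasFDerivAt A (fderiv ℝ A (x 0, r x)) (x 0, r x) :=
    ((hA.contDiffAt (hD.mem_nhds hx)).differentiableAt one_ne_zero).hasFDerivAt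
  have hBd : HasFDerivAt B (fderiv ℝ B (x 0, r x)) (x 0, r x) :=
    ((hB.contDiffAt (hD.mem_nhds hx)).differentiableAt one_ne_zero).hasFDerivAt
  set A' := fderiv ℝ A (x 0, r x) with hA'def
  set B' := fderiv ℝ B (x 0, r x) with hB'def
  have hAgd : HasFDerivAt (fun y : Fin (n+1) → ℝ => A (y 0, r y)) (A'.comp g') x :=
    hAd.comp x hgd
  have hBgd : HasFDerivAt (fun y : Fin (n+1) → ℝ => B (y 0, r y)) (B'.comp g') x :=
    hBd.comp x hgd
  have hinv : HasFDerivAt (fun y : Fin (n+1) → ℝ => (r y)⁻¹) ((-(r x ^ 2)⁻¹) • R') x :=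
    (hasDerivAt_inv hrne).comp_hasFDerivAt x hrd
  set C : (Fin (n+1) → ℝ) →L[ℝ] ℝ :=
    (r x)⁻¹ • (B'.comp g') + B (x 0, r x) • ((-(r x ^ 2)⁻¹) • R') with hCdef
  have hcd : HasFDerivAt (fun y : Fin (n+1) → ℝ => (r y)⁻¹ * B (y 0, r y)) C x :=
    hinv.mul hBgd
  set vecL : (Fin (n+1) → ℝ) →L[ℝ] 𝒜 :=
    ∑ j : Fin n, (ContinuousLinearMap.proj (j.succ : Fin (n+1)) :
      (Fin (n+1) → ℝ) →L[ℝ] ℝ).smulRight (e j) with hvecLdef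
  have hveceq : vec = fun y => vecL y := by
    funext y
    show (∑ j : Fin n, y j.succ • e j) = vecL y
    simp [hvecLdef]
  have hvecd : HasFDerivAt vec vecL x := by
    rw [hveceq]; exact vecL.hasFDerivAt
  have hφd : HasFDerivAt φ
      ((algebraMapCLM ℝ 𝒜).comp (A'.comp g') +
        (((r x)⁻¹ * B (x 0, r x)) • vecL + C.smulRight (vec x))) x := by
    have halg : HasFDerivAt (fun y : Fin (n+1) → ℝ => algebraMap ℝ 𝒜 (A (y 0, r y)))
        ((algebraMapCLM ℝ 𝒜).comp (A'.comp g')) x :=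
      ((algebraMapCLM ℝ 𝒜).hasFDerivAt).comp x hAgd
    exact halg.add (hcd.smul hvecd)
  have happ : ∀ v : Fin (n+1) → ℝ, fderiv ℝ φ x v =
      algebraMap ℝ 𝒜 (A' (v 0, R' v)) + (((r x)⁻¹ * B (x 0, r x)) • vecL v +
        ((r x)⁻¹ * B' (v 0, R' v) + B (x 0, r x) * (-(r x ^ 2)⁻¹ * R' v)) • vec x) := by
    intro v
    rw [hφd.fderiv]
    simp only [ContinuousLinearMap.add_apply, ContinuousLinearMap.comp_apply,
      ContinuousLinearMap.smul_apply, ContinuousLinearMap.smulRight_apply,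
      ContinuousLinearMap.prod_apply, ContinuousLinearMap.proj_apply,
      coe_algebraMapCLM, smul_eq_mul, hg'def, hCdef]
  -- linearity helpers
  have hAlin : ∀ t : ℝ, A' ((0:ℝ), t) = t * A' ((0:ℝ), (1:ℝ)) := by
    intro t
    have hpair : ((0:ℝ), t) = t • ((0:ℝ), (1:ℝ)) := by simp
    rw [hpair, map_smul, smul_eq_mul]
  have hBlin : ∀ t : ℝ, B' ((0:ℝ), t) = t * B' ((0:ℝ), (1:ℝ)) := by
    intro t
    have hpair : ((0:ℝ), t) = t • ((0:ℝ), (1:ℝ)) := by simp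
    rw [hpair, map_smul, smul_eq_mul]
  have hs0 : ∀ j : Fin n, (Pi.single (0 : Fin (n+1)) (1:ℝ) : Fin (n+1) → ℝ) j.succ = 0 :=
    fun j => by simp [Pi.single_apply, Fin.succ_ne_zero j]
  have hvecL0 : vecL (Pi.single (0:Fin (n+1)) (1:ℝ)) = 0 := by
    simp [hvecLdef, hs0]
  have hvecLi : ∀ i : Fin n, vecL (Pi.single (i.succ : Fin (n+1)) (1:ℝ)) = e i := by
    intro i
    simp [hvecLdef, Pi.single_apply, Fin.succ_inj]
  have h0 : fderiv ℝ φ x (Pi.single (0:Fin (n+1)) (1:ℝ)) =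
      algebraMap ℝ 𝒜 (A' (1, 0)) + ((r x)⁻¹ * B' (1, 0)) • vec x := by
    rw [happ, hR0, hvecL0]
    rw [show (Pi.single (0:Fin (n+1)) (1:ℝ) : Fin (n+1) → ℝ) 0 = 1 from Pi.single_eq_same 0 1]
    simp
  have hi : ∀ i : Fin n, fderiv ℝ φ x (Pi.single (i.succ : Fin (n+1)) (1:ℝ)) =
      algebraMap ℝ 𝒜 ((x i.succ * (r x)⁻¹) * A' ((0:ℝ), (1:ℝ))) +
        ((r x)⁻¹ * B (x 0, r x)) • e i +
        ((r x)⁻¹ * ((x i.succ * (r x)⁻¹) * B' ((0:ℝ), (1:ℝ))) +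
          B (x 0, r x) * (-(r x ^ 2)⁻¹ * (x i.succ * (r x)⁻¹))) • vec x := by
    intro i
    rw [happ, hRi i, hvecLi i]
    rw [show (Pi.single (i.succ : Fin (n+1)) (1:ℝ) : Fin (n+1) → ℝ) 0 = 0 from
      Pi.single_eq_of_ne (Ne.symm (Fin.succ_ne_zero i)) 1]
    rw [hAlin, hBlin, ← add_assoc]
  -- Clifford algebra identities
  have hsum_ee : ∑ j : Fin n, e j * e j = (-(n:ℝ)) • (1:𝒜) := by
    simp only [he, Finset.sum_const, Finset.card_univ, Fintype.card_fin]
    rw [← Nat.cast_smul_eq_nsmul ℝ, smul_neg, ← neg_smul]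
  have hexpand : vec x * vec x = ∑ i : Fin n, ∑ j : Fin n,
      (x i.succ * x j.succ) • (e i * e j) := by
    show (∑ i : Fin n, x i.succ • e i) * (∑ j : Fin n, x j.succ • e j) = _
    rw [Finset.sum_mul_sum]
    exact Finset.sum_congr rfl fun i _ => Finset.sum_congr rfl fun j _ =>
      smul_mul_smul_comm (x i.succ) (e i) (x j.succ) (e j)
  have hexpand' : vec x * vec x = ∑ i : Fin n, ∑ j : Fin n,
      (x i.succ * x j.succ) • (e j * e i) := by
    rw [hexpand, Finset.sum_comm]
    exact Finset.sum_congr rfl fun i _ => Finset.sum_congr rfl fun j _ => by rw [mul_comm]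
  have hdouble : (2:ℝ) • (vec x * vec x) =
      ∑ i : Fin n, ∑ j : Fin n, (x i.succ * x j.succ) • (e i * e j + e j * e i) := by
    rw [two_smul]
    nth_rewrite 1 [hexpand]
    nth_rewrite 1 [hexpand']
    rw [← Finset.sum_add_distrib]
    refine Finset.sum_congr rfl fun i _ => ?_
    rw [← Finset.sum_add_distrib]
    exact Finset.sum_congr rfl fun j _ => (smul_add _ _ _).symm
  have hdiag : ∑ i : Fin n, ∑ j : Fin n, (x i.succ * x j.succ) • (e i * e j + e j * e i)
      = ∑ i : Fin n, (x i.succ ^ 2) • ((-2:ℝ) • (1:𝒜)) := by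
    refine Finset.sum_congr rfl fun i _ => ?_
    rw [Finset.sum_eq_single i]
    · rw [he i, ← pow_two, neg_smul, two_smul, neg_add]
    · intro j _ hji
      rw [hanti i j (Ne.symm hji), smul_zero]
    · intro h; exact absurd (Finset.mem_univ i) h
  have hvec2 : vec x * vec x = (-(r x ^ 2)) • (1:𝒜) := by
    have h2 : (2:ℝ) • (vec x * vec x) = (2:ℝ) • ((-(r x ^ 2)) • (1:𝒜)) := by
      rw [hdouble, hdiag, ← Finset.sum_smul, ← hr2, smul_smul, smul_smul]
      congr 1
      ring
    have h3 := congrArg (fun z => (2⁻¹:ℝ) • z) h2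
    simpa [smul_smul] using h3
  -- the main formula
  have hmain : Dop φ x =
      algebraMap ℝ 𝒜 (A' (1, 0) - B' (0, 1) - (((n:ℝ) - 1) / r x) * B (x 0, r x)) +
        ((B' (1, 0) + A' (0, 1)) * (r x)⁻¹) • vec x := by
    show fderiv ℝ φ x (Pi.single 0 1) +
        ∑ j : Fin n, e j * fderiv ℝ φ x (Pi.single j.succ 1) = _
    rw [h0]
    have hterm : ∀ i : Fin n, e i * fderiv ℝ φ x (Pi.single (i.succ : Fin (n+1)) (1:ℝ)) =
        (x i.succ * ((r x)⁻¹ * A' ((0:ℝ), (1:ℝ)))) • e i +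
          ((r x)⁻¹ * B (x 0, r x)) • (e i * e i) +
          ((r x)⁻¹ * ((r x)⁻¹ * B' ((0:ℝ), (1:ℝ))) +
            B (x 0, r x) * (-(r x ^ 2)⁻¹ * (r x)⁻¹)) • ((x i.succ • e i) * vec x) := by
      intro i
      rw [hi i, mul_add, mul_add]
      congr 1
      · congr 1
        · rw [← Algebra.commutes ((x i.succ * (r x)⁻¹) * A' ((0:ℝ), (1:ℝ))) (e i),
            ← Algebra.smul_def, mul_assoc]
        · rw [mul_smul_comm]
      · rw [mul_smul_comm, smul_mul_assoc, smul_smul]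
        congr 1
        ring
    rw [Finset.sum_congr rfl fun i _ => hterm i]
    rw [Finset.sum_add_distrib, Finset.sum_add_distrib]
    have hT1 : ∑ i : Fin n, (x i.succ * ((r x)⁻¹ * A' ((0:ℝ), (1:ℝ)))) • e i =
        ((r x)⁻¹ * A' ((0:ℝ), (1:ℝ))) • vec x := by
      show _ = ((r x)⁻¹ * A' ((0:ℝ), (1:ℝ))) • ∑ j : Fin n, x j.succ • e j
      rw [Finset.smul_sum]
      exact Finset.sum_congr rfl fun i _ => by rw [smul_smul, mul_comm]
    have hT2 : ∑ i : Fin n, ((r x)⁻¹ * B (x 0, r x)) • (e i * e i) =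
        ((r x)⁻¹ * B (x 0, r x)) • ((-(n:ℝ)) • (1:𝒜)) := by
      rw [← Finset.smul_sum, hsum_ee]
    have hT3 : ∑ i : Fin n, ((r x)⁻¹ * ((r x)⁻¹ * B' ((0:ℝ), (1:ℝ))) +
          B (x 0, r x) * (-(r x ^ 2)⁻¹ * (r x)⁻¹)) • ((x i.succ • e i) * vec x) =
        ((r x)⁻¹ * ((r x)⁻¹ * B' ((0:ℝ), (1:ℝ))) +
          B (x 0, r x) * (-(r x ^ 2)⁻¹ * (r x)⁻¹)) • ((-(r x ^ 2)) • (1:𝒜)) := by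
      rw [← Finset.smul_sum, ← Finset.sum_mul]
      show _ • ((∑ j : Fin n, x j.succ • e j) * vec x) = _
      rw [show (∑ j : Fin n, x j.succ • e j) = vec x from rfl, hvec2]
    rw [hT1, hT2, hT3]
    rw [Algebra.algebraMap_eq_smul_one, Algebra.algebraMap_eq_smul_one]
    match_scalars
    all_goals (field_simp; try ring)
  refine ⟨hmain, ?_⟩
  rw [hmain]
  constructor
  · intro h
    obtain ⟨h1, h2⟩ := hindep (fun j => x j.succ) hvx
      (A' (1, 0) - B' (0, 1) - (((n:ℝ) - 1) / r x) * B (x 0, r x))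
      ((B' (1, 0) + A' (0, 1)) * (r x)⁻¹) h
    refine ⟨by linarith, ?_⟩
    rcases mul_eq_zero.mp h2 with h' | h'
    · exact h'
    · exact absurd h' (inv_ne_zero hrne)
  · rintro ⟨h1, h2⟩
    rw [h2, show A' (1, 0) - B' (0, 1) - (((n:ℝ) - 1) / r x) * B (x 0, r x) = 0 from by
      rw [h1]; ring]
    simp
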